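/- arXiv:1802.06336 — 3 statements merged into one kernel-verified Lean document; each statement's English description precedes it below -/
import Mathlib

section
/- Let n and p be positive integers, set μ_p = min(n,p) and μ_p* = p + 1 - μ_p. Then for any meromorphic function f, N_p(r,0;f^n) ≤ μ_p · N_{μ_p*}(r,0;f). -/
open Filter MeasureTheory Metric Finset
open scoped Classical

namespace Nev

/-- The Nevanlinna proximity function `m(r,g)`: the circle average of `log⁺‖g‖`. -/
noncomputable def prox (g : ℂ → ℂ) (r : ℝ) : ℝ :=
  (2 * Real.pi)⁻¹ * ∫ θ in (0:ℝ)..(2 * Real.pi),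
    Real.log (max ‖g (r * Complex.exp (θ * Complex.I))‖ 1)

/-- The meromorphic order of `g` at `z` (junk value `0` if `g` is not meromorphic at `z`
or vanishes identically near `z`). -/
noncomputable def mOrder (g : ℂ → ℂ) (z : ℂ) : ℤ :=
  if h : MeromorphicAt g z then (meromorphicOrderAt g z).untopD 0 else 0

/-- The multiplicity of `z` as a zero of `g`. -/
noncomputable def zeroMult (g : ℂ → ℂ) (z : ℂ) : ℕ := (mOrder g z).toNat

/-- The multiplicity of `z` as a pole of `g`. -/
noncomputable def poleMult (g : ℂ → ℂ) (z : ℂ) : ℕ := (-(mOrder g z)).toNat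

/-- The unintegrated counting function `n(t)` attached to a multiplicity function `μ`. -/
noncomputable def counts (μ : ℂ → ℕ) (t : ℝ) : ℝ :=
  ∑' z : ℂ, (Metric.closedBall (0:ℂ) t).indicator (fun w => (μ w : ℝ)) z

/-- The integrated counting function `N(r)` attached to a multiplicity function `μ`. -/
noncomputable def N (μ : ℂ → ℕ) (r : ℝ) : ℝ :=
  (∫ t in (0:ℝ)..r, (counts μ t - counts μ 0) / t) + counts μ 0 * Real.log r

/-- `N(r,∞;g)`. -/
noncomputable def Npoles (g : ℂ → ℂ) : ℝ → ℝ := N (poleMult g)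

/-- `N̄(r,∞;g)`. -/
noncomputable def NbarPoles (g : ℂ → ℂ) : ℝ → ℝ := N (fun z => min (poleMult g z) 1)

/-- `N(r,0;g)`. -/
noncomputable def Nzeros (g : ℂ → ℂ) : ℝ → ℝ := N (zeroMult g)

/-- The truncated counting function `N_p(r,0;g)`. -/
noncomputable def NzerosTrunc (p : ℕ) (g : ℂ → ℂ) : ℝ → ℝ :=
  N (fun z => min (zeroMult g z) p)

/-- `N̄(r,0;g)`. -/
noncomputable def NbarZeros (g : ℂ → ℂ) : ℝ → ℝ := NzerosTrunc 1 g

/-- `N̄_{(j}(r,0;g)`: reduced counting function of zeros of multiplicity at least `j`. -/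
noncomputable def NbarZerosGe (j : ℕ) (g : ℂ → ℂ) : ℝ → ℝ :=
  N (fun z => if j ≤ zeroMult g z then 1 else 0)

/-- The Nevanlinna characteristic `T(r,g)`. -/
noncomputable def charT (g : ℂ → ℂ) (r : ℝ) : ℝ := prox g r + Npoles g r

/-- `s` is a quantity of type `S(r,f)`: `s = o(T(r,f))` as `r → ∞` outside a set of
finite Lebesgue measure. -/
def SmallRe (f : ℂ → ℂ) (s : ℝ → ℝ) : Prop :=
  ∃ E : Set ℝ, volume E < ⊤ ∧
    Tendsto (fun r => s r / charT f r) (atTop ⊓ 𝓟 Eᶜ) (nhds 0)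

/-- `a` is a small function with respect to `f`: `T(r,a) = S(r,f)`. -/
def SmallFn (f a : ℂ → ℂ) : Prop := SmallRe f (charT a)

/-- The deficiency `δ_p(0,g)`. -/
noncomputable def defic (p : ℕ) (g : ℂ → ℂ) : ℝ :=
  1 - limsup (fun r => NzerosTrunc p g r / charT g r) atTop

/-- `Θ(0,g)`. -/
noncomputable def Theta0 (g : ℂ → ℂ) : ℝ :=
  1 - limsup (fun r => NbarZeros g r / charT g r) atTop

/-- `Θ(∞,g)`. -/
noncomputable def ThetaInf (g : ℂ → ℂ) : ℝ :=
  1 - limsup (fun r => NbarPoles g r / charT g r) atTop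

/-- `g` and `h` share the value `0` with weight `l` (`E_l(0;g) = E_l(0;h)`);
`l = 0` is IM sharing. -/
def Share0 (l : ℕ) (g h : ℂ → ℂ) : Prop :=
  ∀ z, min (zeroMult g z) (l + 1) = min (zeroMult h z) (l + 1)

/-- `f` is meromorphic on `ℂ` and non-constant. -/
def MeroNC (f : ℂ → ℂ) : Prop :=
  (∀ z, MeromorphicAt f z) ∧ ¬ ∃ c : ℂ, ∀ z, f z = c

/-- The multiplicity of `z` as an `a`-point of `f`, for `a ∈ ℂ ∪ {∞}`
(`none` denotes `∞`). -/
noncomputable def multAt (f : ℂ → ℂ) (a : Option ℂ) (z : ℂ) : ℕ :=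
  match a with
  | some c => zeroMult (fun w => f w - c) z
  | none => poleMult f z

/-- The value at `z` of the differential polynomial
`P[f] = Σ_c b_c · f^{n_{0c}} (f')^{n_{1c}} ⋯ (f^{(k)})^{n_{kc}}`. -/
noncomputable def diffPoly {ι : Type*} [Fintype ι] (k : ℕ) (b : ι → ℂ → ℂ)
    (nn : ι → ℕ → ℕ) (f : ℂ → ℂ) : ℂ → ℂ := fun z =>
  ∑ c : ι, b c z * ∏ i ∈ Finset.range (k + 1), iteratedDeriv i f z ^ nn c i

end Nev

/-! A zero of `f` of multiplicity `t` is a zero of `fⁿ` of multiplicity `n t`, and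
`min (n t) p ≤ μ_p · min t μ_p*` pointwise. The counting function `N` is homogeneous, and on
multiplicity functions with locally finite support it is additive and nonnegative for `r ≥ 1`,
hence monotone; so the pointwise inequality passes to the counting functions. -/

open Topology

theorem Nat.min_mul_le_min_mul_min (n p t : ℕ) :
    min (n * t) p ≤ min n p * min t (p + 1 - min n p) := by
  rcases le_total n p with hnp | hpn
  · obtain ⟨k, rfl⟩ := Nat.exists_eq_add_of_le hnp
    rw [min_eq_left hnp, show n + k + 1 - n = k + 1 by omega]
    rcases le_total t (k + 1) with ht | ht
    · rw [min_eq_left ht]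
      exact min_le_left _ _
    · rw [min_eq_right ht]
      rcases Nat.eq_zero_or_pos n with rfl | hn
      · simp
      · exact (min_le_right _ _).trans (by nlinarith)
  · rw [min_eq_right hpn, Nat.add_sub_cancel_left]
    rcases Nat.eq_zero_or_pos t with rfl | ht
    · simp
    · rw [min_eq_right (show 1 ≤ t from ht), mul_one]
      exact min_le_right _ _

namespace Nev

def FiniteOnBalls (μ : ℂ → ℕ) : Prop :=
  ∀ t : ℝ, (Function.support μ ∩ closedBall (0 : ℂ) t).Finite

variable {μ ν : ℂ → ℕ}

namespace FiniteOnBalls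

theorem subset (hν : FiniteOnBalls ν) (h : Function.support μ ⊆ Function.support ν) :
    FiniteOnBalls μ := fun t =>
  (hν t).subset (Set.inter_subset_inter_left _ h)

theorem mono (hν : FiniteOnBalls ν) (hle : μ ≤ ν) : FiniteOnBalls μ :=
  hν.subset fun z (hz : μ z ≠ 0) => ((Nat.pos_of_ne_zero hz).trans_le (hle z)).ne'

theorem summable_indicator (hμ : FiniteOnBalls μ) (t : ℝ) :
    Summable ((closedBall (0 : ℂ) t).indicator fun z => (μ z : ℝ)) :=
  summable_of_hasFiniteSupport <| (hμ t).subset fun z hz => by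
    by_cases hzt : z ∈ closedBall (0 : ℂ) t
    · rw [Function.mem_support, Set.indicator_of_mem hzt, Nat.cast_ne_zero] at hz
      exact ⟨hz, hzt⟩
    · exact absurd (Set.indicator_of_notMem hzt _) hz

end FiniteOnBalls

theorem counts_nonneg (μ : ℂ → ℕ) (t : ℝ) : 0 ≤ counts μ t :=
  tsum_nonneg fun _ => Set.indicator_nonneg (fun _ _ => Nat.cast_nonneg _) _

theorem counts_add (hμ : FiniteOnBalls μ) (hν : FiniteOnBalls ν) (t : ℝ) :
    counts (μ + ν) t = counts μ t + counts ν t := by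
  simp only [counts, Pi.add_apply, Nat.cast_add, Set.indicator_add]
  exact (hμ.summable_indicator t).tsum_add (hν.summable_indicator t)

theorem counts_const_mul (c : ℕ) (μ : ℂ → ℕ) (t : ℝ) :
    counts (fun z => c * μ z) t = c * counts μ t := by
  simp only [counts, Nat.cast_mul, Set.indicator_const_mul]
  exact tsum_mul_left

theorem FiniteOnBalls.monotone_counts (hμ : FiniteOnBalls μ) : Monotone (counts μ) :=
  fun _ _ hst => (hμ.summable_indicator _).tsum_le_tsum
    (Set.indicator_le_indicator_of_subset (closedBall_subset_closedBall hst)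
      fun _ => Nat.cast_nonneg _)
    (hμ.summable_indicator _)

theorem FiniteOnBalls.exists_counts_eq_counts_zero (hμ : FiniteOnBalls μ) :
    ∃ ε > 0, ∀ t ∈ Set.Ico 0 ε, counts μ t = counts μ 0 := by
  have hS : ((Function.support μ ∩ closedBall 0 1) \ {0})ᶜ ∈ 𝓝 (0 : ℂ) :=
    (hμ 1).sdiff.isClosed.isOpen_compl.mem_nhds fun h => h.2 rfl
  obtain ⟨ε, hε, hball⟩ := Metric.mem_nhds_iff.mp hS
  refine ⟨min ε 1, by positivity, fun t ⟨ht0, htε⟩ => tsum_congr fun z => ?_⟩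
  by_cases hz : z = 0
  · simp [hz, ht0]
  by_cases hzt : z ∈ closedBall (0 : ℂ) t
  · have hzε : ‖z‖ < min ε 1 := (mem_closedBall_zero_iff.mp hzt).trans_lt htε
    have hμz : μ z = 0 := by
      by_contra hμz
      refine hball (mem_ball_zero_iff.mpr (hzε.trans_le (min_le_left _ _))) ⟨⟨hμz, ?_⟩, hz⟩
      exact mem_closedBall_zero_iff.mpr (hzε.le.trans (min_le_right _ _))
    simp [hzt, hz, hμz]
  · simp [hzt, hz]

theorem FiniteOnBalls.intervalIntegrable_counts_sub_div (hμ : FiniteOnBalls μ) {r : ℝ}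
    (hr : 0 < r) :
    IntervalIntegrable (fun t => (counts μ t - counts μ 0) / t) volume 0 r := by
  obtain ⟨ε, hε, hconst⟩ := hμ.exists_counts_eq_counts_zero
  set δ := min (ε / 2) r
  have hδ : 0 < δ := by positivity
  have near : IntervalIntegrable (fun t => (counts μ t - counts μ 0) / t) volume 0 δ := by
    refine (intervalIntegrable_const (c := (0 : ℝ))).congr fun t ht => ?_
    rw [Set.uIoc_of_le hδ.le] at ht
    rw [hconst t ⟨ht.1.le, ht.2.trans_lt ((min_le_left _ _).trans_lt (half_lt_self hε))⟩,
      sub_self, zero_div]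
  have far : IntervalIntegrable (fun t => (counts μ t - counts μ 0) / t) volume δ r := by
    refine ((hμ.monotone_counts.intervalIntegrable.sub intervalIntegrable_const).mul_continuousOn
      (g := fun t => t⁻¹) (continuousOn_inv₀.mono fun t ht => ?_))
    rw [Set.uIcc_of_le (min_le_right _ _)] at ht
    exact (hδ.trans_le ht.1).ne'
  exact near.trans far

theorem N_add (hμ : FiniteOnBalls μ) (hν : FiniteOnBalls ν) {r : ℝ} (hr : 0 < r) :
    N (μ + ν) r = N μ r + N ν r := by
  have hsplit : (fun t => (counts (μ + ν) t - counts (μ + ν) 0) / t) =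
      fun t => (counts μ t - counts μ 0) / t + (counts ν t - counts ν 0) / t := by
    funext t
    rw [counts_add hμ hν, counts_add hμ hν]
    ring
  rw [N, N, N, hsplit, intervalIntegral.integral_add (hμ.intervalIntegrable_counts_sub_div hr)
    (hν.intervalIntegrable_counts_sub_div hr), counts_add hμ hν]
  ring

theorem N_const_mul (c : ℕ) (μ : ℂ → ℕ) (r : ℝ) :
    N (fun z => c * μ z) r = c * N μ r := by
  have hfactor : (fun t => (counts (fun z => c * μ z) t - counts (fun z => c * μ z) 0) / t) =
      fun t => c * ((counts μ t - counts μ 0) / t) := by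
    funext t
    rw [counts_const_mul, counts_const_mul]
    ring
  rw [N, N, hfactor, intervalIntegral.integral_const_mul, counts_const_mul]
  ring

theorem FiniteOnBalls.N_nonneg (hμ : FiniteOnBalls μ) {r : ℝ} (hr : 1 ≤ r) : 0 ≤ N μ r :=
  add_nonneg
    (intervalIntegral.integral_nonneg (by linarith) fun t ht =>
      div_nonneg (sub_nonneg.mpr (hμ.monotone_counts ht.1)) ht.1)
    (mul_nonneg (counts_nonneg μ 0) (Real.log_nonneg hr))

theorem FiniteOnBalls.N_mono (hν : FiniteOnBalls ν) (hle : μ ≤ ν) {r : ℝ} (hr : 1 ≤ r) :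
    N μ r ≤ N ν r := by
  have hμ := hν.mono hle
  have hdiff := hν.mono (tsub_le_self : ν - μ ≤ ν)
  calc N μ r ≤ N μ r + N (ν - μ) r := le_add_of_nonneg_right (hdiff.N_nonneg hr)
    _ = N ν r := by rw [← N_add hμ hdiff (by linarith), add_tsub_cancel_of_le hle]

theorem mOrder_eq_divisor {f : ℂ → ℂ} {U : Set ℂ} {z : ℂ} (hf : MeromorphicOn f U)
    (hz : z ∈ U) : mOrder f z = MeromorphicOn.divisor f U z := by
  rw [mOrder, dif_pos (hf z hz), MeromorphicOn.divisor_apply hf hz]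
  rfl

theorem finiteOnBalls_zeroMult {f : ℂ → ℂ} (hf : ∀ z, MeromorphicAt f z) :
    FiniteOnBalls (zeroMult f) := fun t =>
  ((MeromorphicOn.divisor f (closedBall 0 t)).finiteSupport (isCompact_closedBall 0 t)).subset
    fun z ⟨hz, hzt⟩ hdiv => hz <| by
      rw [zeroMult, mOrder_eq_divisor (fun w _ => hf w) hzt, hdiv, Int.toNat_zero]

theorem mOrder_pow {f : ℂ → ℂ} {z : ℂ} (hf : MeromorphicAt f z) (n : ℕ) :
    mOrder (fun w => f w ^ n) z = n * mOrder f z := by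
  rw [mOrder, mOrder, dif_pos (hf.fun_pow n), dif_pos hf,
    show (fun w => f w ^ n) = f ^ n from rfl, meromorphicOrderAt_pow hf, WithTop.untopD_zero_mul]
  rfl

theorem zeroMult_pow {f : ℂ → ℂ} {z : ℂ} (hf : MeromorphicAt f z) (n : ℕ) :
    zeroMult (fun w => f w ^ n) z = n * zeroMult f z := by
  rw [zeroMult, zeroMult, mOrder_pow hf]
  rcases le_total 0 (mOrder f z) with h | h
  · lift mOrder f z to ℕ using h with m
    rw [← Nat.cast_mul, Int.toNat_natCast, Int.toNat_natCast]
  · rw [Int.toNat_of_nonpos h,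
      Int.toNat_of_nonpos (mul_nonpos_of_nonneg_of_nonpos n.cast_nonneg h), mul_zero]

end Nev

open Nev

theorem stmt_2_general (n p : ℕ) (f : ℂ → ℂ)
    (hf : ∀ z, MeromorphicAt f z) :
    ∀ r : ℝ, 1 ≤ r →
      Nev.NzerosTrunc p (fun z => f z ^ n) r
        ≤ (min n p : ℝ) * Nev.NzerosTrunc (p + 1 - min n p) f r := by
  intro r hr
  have hle : (fun z => min (zeroMult (fun w => f w ^ n) z) p) ≤
      fun z => min n p * min (zeroMult f z) (p + 1 - min n p) := fun z => by
    dsimp only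
    rw [zeroMult_pow (hf z)]
    exact Nat.min_mul_le_min_mul_min n p _
  have hfin : FiniteOnBalls fun z => min n p * min (zeroMult f z) (p + 1 - min n p) :=
    (finiteOnBalls_zeroMult hf).subset <| Function.support_subset_iff'.mpr fun z hz => by
      rw [Function.notMem_support.mp hz, Nat.zero_min, mul_zero]
  calc NzerosTrunc p (fun z => f z ^ n) r
      ≤ N (fun z => min n p * min (zeroMult f z) (p + 1 - min n p)) r := hfin.N_mono hle hr
    _ = (min n p : ℝ) * NzerosTrunc (p + 1 - min n p) f r := by
      rw [N_const_mul, Nat.cast_min, NzerosTrunc]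

/-- For positive integers `n`, `p`, with `μ_p = min n p` and
`μ_p* = p + 1 - μ_p`, and any meromorphic `f`, `N_p(r,0;fⁿ) ≤ μ_p · N_{μ_p*}(r,0;f)`. -/
theorem stmt_2 (n p : ℕ) (hn : 0 < n) (hp : 0 < p) (f : ℂ → ℂ)
    (hf : ∀ z, MeromorphicAt f z) :
    ∀ r : ℝ, 1 ≤ r →
      Nev.NzerosTrunc p (fun z => f z ^ n) r
        ≤ (min n p : ℝ) * Nev.NzerosTrunc (p + 1 - min n p) f r :=
  stmt_2_general n p f hf
end

section
/- For positive integers n and p, for all positive integers t, min(n·t, p) ≤ min(n,p) · min(t, p + 1 - min(n,p)). -/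
/-- For positive integers `n`, `p` and every positive integer `t`,
`min (n·t) p ≤ min n p · min t (p + 1 - min n p)`. -/
theorem stmt_3 (n p : ℕ) (hn : 0 < n) (hp : 0 < p) :
    ∀ t : ℕ, 0 < t → min (n * t) p ≤ min n p * min t (p + 1 - min n p) := by
  intro t ht
  set μ := min n p with hμ
  have hμ1 : 1 ≤ μ := le_min hn hp
  have hμp : μ ≤ p := min_le_right n p
  rcases le_or_gt (p + 1 - μ) t with h | h
  · rw [min_eq_right h]
    have key : p ≤ μ * (p + 1 - μ) := by
      obtain ⟨k, hk⟩ : ∃ k, p + 1 - μ = k ∧ μ + k = p + 1 := ⟨p + 1 - μ, rfl, by omega⟩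
      rcases hk with ⟨hk1, hk2⟩
      rw [hk1]
      nlinarith [hμ1, hk2, Nat.one_le_iff_ne_zero.mpr (show k ≠ 0 by omega)]
    exact le_trans (min_le_right _ _) key
  · rw [min_eq_left h.le]
    have hnμ : μ = n := by
      rcases min_cases n p with ⟨h1, _⟩ | ⟨h1, h2⟩
      · omega
      · omega
    rw [hnμ]
    exact le_trans (min_le_left _ _) le_rfl
end

section
/- Let P[f] be a homogeneous differential polynomial of (lower) degree d = d̲(P), weight Γ_P, and order k, with Γ_P > (k+1)d − (p+1), and let j, p be positive integers with j ≥ p+1. If z₀ is a zero of f of multiplicity t with t·d ≥ j + Γ_P − d, then t ≥ k+1 and z₀ is a zero of P[f] of multiplicity at least j. -/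
/-! Measure zeros by their analytic order. Differentiating a function
with a zero of order at least `n` leaves a zero of order at least `n - 1`, so `f^{(i)}` vanishes
to order at least `t - i` at `z₀`. Orders add under products and do not drop under sums, so the
monomial `M_c[f]` vanishes to order at least `∑ (t - i) n_{ci} = (t + 1) d - Γ_{M_c}`, which is at
least `j`. -/

open Filter Finset Topology

section AnalyticOrder

variable {𝕜 : Type*} [NontriviallyNormedField 𝕜] {z₀ : 𝕜}

theorem le_analyticOrderAt_sum {E ι : Type*} [NormedAddCommGroup E] [NormedSpace 𝕜 E]
    {F : ι → 𝕜 → E} {n : ℕ∞} (s : Finset ι) (hF : ∀ i ∈ s, n ≤ analyticOrderAt (F i) z₀) :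
    n ≤ analyticOrderAt (fun z ↦ ∑ i ∈ s, F i z) z₀ := by
  classical
  induction s using Finset.induction_on with
  | empty =>
    rw [analyticOrderAt_eq_top.2 (.of_forall fun _ ↦ sum_empty)]
    exact le_top
  | insert a s ha ih =>
    simp only [sum_insert ha]
    rw [forall_mem_insert] at hF
    exact (le_min hF.1 (ih hF.2)).trans le_analyticOrderAt_add

theorem analyticOrderAt_prod {ι : Type*} {F : ι → 𝕜 → 𝕜} (s : Finset ι)
    (hF : ∀ i ∈ s, AnalyticAt 𝕜 (F i) z₀) :
    analyticOrderAt (fun z ↦ ∏ i ∈ s, F i z) z₀ = ∑ i ∈ s, analyticOrderAt (F i) z₀ := by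
  classical
  induction s using Finset.induction_on with
  | empty => simp [analyticOrderAt_eq_zero]
  | insert a s ha ih =>
    rw [forall_mem_insert] at hF
    simp only [prod_insert ha, sum_insert ha]
    rw [← ih hF.2]
    exact analyticOrderAt_mul hF.1 (s.analyticAt_fun_prod hF.2)

variable [CompleteSpace 𝕜] {f : 𝕜 → 𝕜}

@[fun_prop]
theorem analyticAt_iteratedDeriv (hf : AnalyticAt 𝕜 f z₀) (i : ℕ) :
    AnalyticAt 𝕜 (iteratedDeriv i f) z₀ := by
  simpa only [iteratedDeriv_eq_iterate] using hf.iterated_deriv i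

variable [CharZero 𝕜]

theorem AnalyticAt.natCast_le_analyticOrderAt_deriv (hf : AnalyticAt 𝕜 f z₀) {n : ℕ}
    (h : (n + 1 : ℕ) ≤ analyticOrderAt f z₀) : n ≤ analyticOrderAt (deriv f) z₀ := by
  have hf₀ : f z₀ = 0 :=
    apply_eq_zero_of_analyticOrderAt_ne_zero (ne_bot_of_le_ne_bot (by simp) h)
  have hderiv : analyticOrderAt (deriv f) z₀ + 1 = analyticOrderAt f z₀ := by
    simpa [hf₀] using hf.analyticOrderAt_deriv_add_one
  rw [← hderiv, Nat.cast_add_one] at h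
  exact (ENat.add_le_add_iff_right ENat.one_ne_top).1 h

theorem AnalyticAt.natCast_sub_le_analyticOrderAt_iteratedDeriv (hf : AnalyticAt 𝕜 f z₀)
    {n : ℕ} (h : n ≤ analyticOrderAt f z₀) (i : ℕ) :
    (n - i : ℕ) ≤ analyticOrderAt (iteratedDeriv i f) z₀ := by
  induction i with
  | zero => simpa using h
  | succ i ih =>
    rw [iteratedDeriv_succ]
    rcases Nat.eq_zero_or_pos (n - i) with hi | hi
    · simp [show n - (i + 1) = 0 by omega]
    · refine (analyticAt_iteratedDeriv hf i).natCast_le_analyticOrderAt_deriv ?_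
      rwa [show n - (i + 1) + 1 = n - i by omega]

theorem AnalyticAt.natCast_le_analyticOrderAt_prod_iteratedDeriv_pow (hf : AnalyticAt 𝕜 f z₀)
    {t : ℕ} (ht : t ≤ analyticOrderAt f z₀) (s : Finset ℕ) (n : ℕ → ℕ) :
    (∑ i ∈ s, (t - i) * n i : ℕ) ≤
      analyticOrderAt (fun z ↦ ∏ i ∈ s, iteratedDeriv i f z ^ n i) z₀ := by
  rw [analyticOrderAt_prod s fun i _ ↦ by fun_prop, Nat.cast_sum]
  refine sum_le_sum fun i _ ↦ ?_
  rw [show (fun z ↦ iteratedDeriv i f z ^ n i) = iteratedDeriv i f ^ n i from rfl,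
    analyticOrderAt_pow (analyticAt_iteratedDeriv hf i), Nat.cast_mul, mul_comm, nsmul_eq_mul]
  gcongr
  exact hf.natCast_sub_le_analyticOrderAt_iteratedDeriv ht i

end AnalyticOrder

theorem sum_tsub_mul_add_sum_succ_mul {k t : ℕ} (hkt : k ≤ t) (n : ℕ → ℕ) :
    ∑ i ∈ range (k + 1), (t - i) * n i + ∑ i ∈ range (k + 1), (i + 1) * n i
      = (t + 1) * ∑ i ∈ range (k + 1), n i := by
  rw [← sum_add_distrib, mul_sum]
  refine sum_congr rfl fun i hi ↦ ?_
  rw [← add_mul, show t - i + (i + 1) = t + 1 by have := mem_range.1 hi; omega]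

theorem stmt_6_general (k d Γ p j t : ℕ) (hj : p + 1 ≤ j)
    {ι : Type*} [Fintype ι] (nn : ι → ℕ → ℕ) (b : ι → ℂ → ℂ)
    (f g : ℂ → ℂ) (z₀ : ℂ)
    (hdeg : ∀ c, ∑ i ∈ Finset.range (k + 1), nn c i = d)
    (hwt : ∀ c, ∑ i ∈ Finset.range (k + 1), (i + 1) * nn c i ≤ Γ)
    (hΓ : ((k + 1) * d : ℤ) - (p + 1) < (Γ : ℤ))
    (hb : ∀ c, AnalyticAt ℂ (b c) z₀)
    (hg : AnalyticAt ℂ g z₀)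
    (hf : ∀ᶠ z in nhds z₀, f z = (z - z₀) ^ t * g z)
    (htd : (j : ℤ) + Γ - d ≤ (t * d : ℤ)) :
    k + 1 ≤ t ∧
      ∃ h : ℂ → ℂ, AnalyticAt ℂ h z₀ ∧
        ∀ᶠ z in nhds z₀,
          (∑ c : ι, b c z * ∏ i ∈ Finset.range (k + 1), iteratedDeriv i f z ^ nn c i)
            = (z - z₀) ^ j * h z := by
  have hkt : k + 1 ≤ t := by
    by_contra! htk
    have : (t : ℤ) * d ≤ k * d := mul_le_mul_of_nonneg_right (by omega) (by positivity)
    linarith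
  have hfa : AnalyticAt ℂ f z₀ :=
    (by fun_prop : AnalyticAt ℂ (fun z ↦ (z - z₀) ^ t * g z) z₀).congr (EventuallyEq.symm hf)
  have hft : (t : ℕ∞) ≤ analyticOrderAt f z₀ :=
    (natCast_le_analyticOrderAt hfa).2 ⟨g, hg, by simpa using hf⟩
  have hmonomial (c : ι) : (j : ℕ∞) ≤ analyticOrderAt
      (fun z ↦ b c z * ∏ i ∈ range (k + 1), iteratedDeriv i f z ^ nn c i) z₀ := by
    have hweight := sum_tsub_mul_add_sum_succ_mul (by omega : k ≤ t) (nn c)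
    rw [hdeg c] at hweight
    have hjc : j ≤ ∑ i ∈ range (k + 1), (t - i) * nn c i := by
      have hwtc : (∑ i ∈ range (k + 1), (i + 1) * nn c i : ℤ) ≤ Γ := by exact_mod_cast hwt c
      zify at hweight
      linarith
    calc (j : ℕ∞) ≤ (∑ i ∈ range (k + 1), (t - i) * nn c i : ℕ) := by exact_mod_cast hjc
      _ ≤ analyticOrderAt (fun z ↦ ∏ i ∈ range (k + 1), iteratedDeriv i f z ^ nn c i) z₀ :=
        hfa.natCast_le_analyticOrderAt_prod_iteratedDeriv_pow hft _ _
      _ ≤ _ := le_add_self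
      _ = _ := (analyticOrderAt_mul (hb c) (by fun_prop)).symm
  have hP := le_analyticOrderAt_sum univ fun c _ ↦ hmonomial c
  obtain ⟨h, hh, hPh⟩ := (natCast_le_analyticOrderAt (by fun_prop)).1 hP
  exact ⟨hkt, h, hh, by simpa only [smul_eq_mul] using hPh⟩

/-- Let `P[f] = Σ_c b_c M_c[f]` be a homogeneous differential polynomial of
degree `d`, weight `Γ` and order `k`, with `Γ > (k+1)d − (p+1)` and the coefficients `b_c`
holomorphic at `z₀`.  If `j ≥ p + 1` and `z₀` is a zero of `f` of multiplicity `t` with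
`t·d ≥ j + Γ − d`, then `t ≥ k + 1` and `z₀` is a zero of `P[f]` of multiplicity at least `j`. -/
theorem stmt_6 (k d Γ p j t : ℕ) (hp : 0 < p) (hj : p + 1 ≤ j)
    {ι : Type*} [Fintype ι] (nn : ι → ℕ → ℕ) (b : ι → ℂ → ℂ)
    (f g : ℂ → ℂ) (z₀ : ℂ)
    (hdeg : ∀ c, ∑ i ∈ Finset.range (k + 1), nn c i = d)
    (hwt : ∀ c, ∑ i ∈ Finset.range (k + 1), (i + 1) * nn c i ≤ Γ)
    (hΓ : ((k + 1) * d : ℤ) - (p + 1) < (Γ : ℤ))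
    (hb : ∀ c, AnalyticAt ℂ (b c) z₀)
    (hg : AnalyticAt ℂ g z₀) (hg0 : g z₀ ≠ 0) (ht0 : 0 < t)
    (hf : ∀ᶠ z in nhds z₀, f z = (z - z₀) ^ t * g z)
    (htd : (j : ℤ) + Γ - d ≤ (t * d : ℤ)) :
    k + 1 ≤ t ∧
      ∃ h : ℂ → ℂ, AnalyticAt ℂ h z₀ ∧
        ∀ᶠ z in nhds z₀,
          (∑ c : ι, b c z * ∏ i ∈ Finset.range (k + 1), iteratedDeriv i f z ^ nn c i)
            = (z - z₀) ^ j * h z :=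
  stmt_6_general k d Γ p j t hj nn b f g z₀ hdeg hwt hΓ hb hg hf htd
end
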